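/- The boundary values of φ̃ at the endpoints of its domain satisfy lim_{z→a, z∈ℂ∖((−∞,0]∪[a,∞))} φ̃(z) = 0 and lim_{z→0, z∈ℂ∖((−∞,0]∪[a,∞))} φ̃(z) = (1/2)·log c. -/

import Mathlib

open Complex Finset Filter Topology

/-- `a := (1−√c)/(1+√c)`. -/
noncomputable def aconst (c : ℝ) : ℝ := (1 - Real.sqrt c) / (1 + Real.sqrt c)

/-- `b := (1+√c)/(1−√c)`. -/
noncomputable def bconst (c : ℝ) : ℝ := (1 + Real.sqrt c) / (1 - Real.sqrt c)

/-- The principal branch of the complex square root. -/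
noncomputable def csqrt (z : ℂ) : ℂ := z ^ (1 / 2 : ℂ)

/-- The function `φ(z)`, defined using principal branches. -/
noncomputable def phiFun (c : ℝ) (z : ℂ) : ℂ :=
  z * Complex.log ((csqrt ((bconst c : ℂ) * z - 1) + csqrt ((aconst c : ℂ) * z - 1)) /
      (csqrt ((bconst c : ℂ) * z - 1) - csqrt ((aconst c : ℂ) * z - 1))) -
  Complex.log ((csqrt (z - (aconst c : ℂ)) + csqrt (z - (bconst c : ℂ))) /
      (csqrt (z - (aconst c : ℂ)) - csqrt (z - (bconst c : ℂ))))

/-- The function `φ̃(z)`, defined using principal branches. -/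
noncomputable def phiTilde (c : ℝ) (z : ℂ) : ℂ :=
  z * Complex.log ((csqrt (1 - (aconst c : ℂ) * z) + csqrt (1 - (bconst c : ℂ) * z)) /
      (csqrt (1 - (aconst c : ℂ) * z) - csqrt (1 - (bconst c : ℂ) * z))) -
  Complex.log ((csqrt ((bconst c : ℂ) - z) + csqrt ((aconst c : ℂ) - z)) /
      (csqrt ((bconst c : ℂ) - z) - csqrt ((aconst c : ℂ) - z)))

/-- The domain `ℂ ∖ (−∞, b]` of `φ`. -/
def phiDom (c : ℝ) : Set ℂ := {z : ℂ | ¬(z.im = 0 ∧ z.re ≤ bconst c)}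

/-- The domain `ℂ ∖ ((−∞, 0] ∪ [a, ∞))` of `φ̃`. -/
def phiTildeDom (c : ℝ) : Set ℂ := {z : ℂ | ¬(z.im = 0 ∧ (z.re ≤ 0 ∨ aconst c ≤ z.re))}

/-- The function `φ′(z) = Log[(√(bz−1)+√(az−1))/(√(bz−1)−√(az−1))]`. -/
noncomputable def phiDeriv (c : ℝ) (z : ℂ) : ℂ :=
  Complex.log ((csqrt ((bconst c : ℂ) * z - 1) + csqrt ((aconst c : ℂ) * z - 1)) /
      (csqrt ((bconst c : ℂ) * z - 1) - csqrt ((aconst c : ℂ) * z - 1)))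

/-! At `z = a` both quotients inside the logarithms of `φ̃` are continuous and, because
`1 - b a = 0` and `a - a = 0`, equal to `1`; so `φ̃` is continuous at `a` with `φ̃(a) = 0`. At `z = 0` the second
quotient is continuous with value `(√b + √a)/(√b - √a) = (1 + a)/(1 - a) = 1/√c`. In the first,
with `p = √(1 - a z)` and `q = √(1 - b z)`, we have `p + q → 2` while `(p + q)(p - q) = (b - a) z`,
so `|z| |(p + q)/(p - q)| → 4/(b - a)`; as `|log w| ≤ |log |w|| + π`, the term
`z log ((p + q)/(p - q))` is `O(|z| (1 + |log |z||)) → 0`. -/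

lemma csqrt_sq (z : ℂ) : csqrt z ^ 2 = z := by
  simp [csqrt]

lemma csqrt_one : csqrt 1 = 1 := by simp [csqrt]

lemma csqrt_ofReal {x : ℝ} (hx : 0 ≤ x) : csqrt (x : ℂ) = (Real.sqrt x : ℂ) := by
  rw [csqrt, show (1 / 2 : ℂ) = ((1 / 2 : ℝ) : ℂ) by norm_num, ← ofReal_cpow hx,
    Real.sqrt_eq_rpow]

lemma ContinuousAt.csqrt {f : ℂ → ℂ} {z₀ : ℂ} (hf : ContinuousAt f z₀) {x : ℝ} (hx : 0 ≤ x)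
    (hfz₀ : f z₀ = x) : ContinuousAt (fun z => csqrt (f z)) z₀ :=
  (continuousAt_cpow_const_of_re_pos (by simp [hfz₀, hx]) (by norm_num)).comp hf

lemma tendsto_log_csqrt_add_div_csqrt_sub {f g : ℂ → ℂ} {z₀ : ℂ} {x y : ℝ}
    (hf : ContinuousAt f z₀) (hg : ContinuousAt g z₀) (hfz₀ : f z₀ = x) (hgz₀ : g z₀ = y)
    (hy : 0 ≤ y) (hyx : y < x) :
    Tendsto (fun z => log ((csqrt (f z) + csqrt (g z)) / (csqrt (f z) - csqrt (g z)))) (𝓝 z₀)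
      (𝓝 (Real.log ((Real.sqrt x + Real.sqrt y) / (Real.sqrt x - Real.sqrt y)))) := by
  have hsqrt : Real.sqrt y < Real.sqrt x := Real.sqrt_lt_sqrt hy hyx
  have hratio : 0 < (Real.sqrt x + Real.sqrt y) / (Real.sqrt x - Real.sqrt y) :=
    div_pos (by linarith [Real.sqrt_nonneg y]) (sub_pos.2 hsqrt)
  have hp := hf.csqrt (hy.trans hyx.le) hfz₀
  have hq := hg.csqrt hy hgz₀
  have hval : (csqrt (f z₀) + csqrt (g z₀)) / (csqrt (f z₀) - csqrt (g z₀)) =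
      ((Real.sqrt x + Real.sqrt y) / (Real.sqrt x - Real.sqrt y) : ℝ) := by
    rw [hfz₀, hgz₀, csqrt_ofReal (hy.trans hyx.le), csqrt_ofReal hy]
    push_cast
    rfl
  have hden : csqrt (f z₀) - csqrt (g z₀) ≠ 0 := by
    rw [hfz₀, hgz₀, csqrt_ofReal (hy.trans hyx.le), csqrt_ofReal hy, ← ofReal_sub, ofReal_ne_zero]
    exact (sub_pos.2 hsqrt).ne'
  have hcont : ContinuousAt
      (fun z => log ((csqrt (f z) + csqrt (g z)) / (csqrt (f z) - csqrt (g z)))) z₀ :=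
    ((hp.add hq).div (hp.sub hq) hden).clog (by
      simpa only [Pi.div_apply, Pi.add_apply, Pi.sub_apply, hval] using
        ofReal_mem_slitPlane.2 hratio)
  simpa only [ContinuousAt, hval, ofReal_log hratio.le] using hcont

lemma norm_log_le_abs_log_norm_add_pi (w : ℂ) : ‖log w‖ ≤ |Real.log ‖w‖| + Real.pi := by
  refine (norm_add_le _ _).trans ?_
  simpa [norm_real] using abs_arg_le_pi w

lemma abs_log_norm_le {z : ℂ} (hz : z ≠ 0) (w : ℂ) :
    |Real.log ‖w‖| ≤ |Real.log (‖z‖ * ‖w‖)| + |Real.log ‖z‖| := by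
  rcases eq_or_ne w 0 with rfl | hw
  · simp
  rw [Real.log_mul (norm_ne_zero_iff.2 hz) (norm_ne_zero_iff.2 hw)]
  simpa using abs_sub (Real.log ‖z‖ + Real.log ‖w‖) (Real.log ‖z‖)

lemma tendsto_mul_log_of_tendsto_norm_mul {w : ℂ → ℂ} {l : Filter ℂ} {L : ℝ} (hl : l ≤ 𝓝 0)
    (hL : L ≠ 0) (hw : Tendsto (fun z => ‖z‖ * ‖w z‖) l (𝓝 L)) :
    Tendsto (fun z => z * log (w z)) l (𝓝 0) := by
  have hnorm : Tendsto (fun z : ℂ => ‖z‖) l (𝓝 0) := by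
    simpa using (continuous_norm.tendsto (0 : ℂ)).mono_left hl
  have hbound : Tendsto
      (fun z => ‖z‖ * |Real.log (‖z‖ * ‖w z‖)| + |‖z‖ * Real.log ‖z‖| + ‖z‖ * Real.pi) l (𝓝 0) := by
    have h₁ := hnorm.mul ((Real.continuousAt_log hL).tendsto.comp hw).abs
    have h₂ := ((Real.continuous_mul_log.tendsto 0).comp hnorm).abs
    have h₃ := hnorm.mul_const Real.pi
    simpa using (h₁.add h₂).add h₃
  refine squeeze_zero_norm (fun z => ?_) hbound
  rcases eq_or_ne z 0 with rfl | hz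
  · simp
  rw [norm_mul, abs_mul, abs_norm]
  have := (norm_log_le_abs_log_norm_add_pi (w z)).trans
    (add_le_add_left (abs_log_norm_le hz (w z)) _)
  nlinarith [norm_nonneg z]

lemma norm_mul_norm_add_div_sub {p q k z : ℂ} (h : p ^ 2 - q ^ 2 = k * z) (hk : k ≠ 0)
    (hz : z ≠ 0) : ‖z‖ * ‖(p + q) / (p - q)‖ = ‖p + q‖ ^ 2 / ‖k‖ := by
  have hprod : (p + q) * (p - q) = k * z := by linear_combination h
  have hsub : p - q ≠ 0 := right_ne_zero_of_mul (hprod ▸ mul_ne_zero hk hz)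
  have : (p + q) / (p - q) = (p + q) ^ 2 / (k * z) := by
    rw [← hprod]
    field_simp
  rw [this, norm_div, norm_mul, norm_pow]
  field_simp

lemma tendsto_mul_log_csqrt_add_div_csqrt_sub {α β : ℂ} (hαβ : α ≠ β) :
    Tendsto (fun z => z * log ((csqrt (1 - α * z) + csqrt (1 - β * z)) /
      (csqrt (1 - α * z) - csqrt (1 - β * z)))) (𝓝[≠] 0) (𝓝 0) := by
  have hsqrt : ∀ k : ℂ, Tendsto (fun z => csqrt (1 - k * z)) (𝓝 0) (𝓝 1) := fun k => by
    have h := (show ContinuousAt (fun z : ℂ => 1 - k * z) 0 by fun_prop).csqrt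
      (x := 1) zero_le_one (by simp)
    simpa [csqrt_one] using h.tendsto
  have hk : β - α ≠ 0 := sub_ne_zero.2 hαβ.symm
  refine tendsto_mul_log_of_tendsto_norm_mul nhdsWithin_le_nhds
    (L := ‖(1 + 1 : ℂ)‖ ^ 2 / ‖β - α‖) (by norm_num [hk]) ?_
  refine ((((hsqrt α).add (hsqrt β)).norm.pow 2).div_const _).mono_left nhdsWithin_le_nhds
    |>.congr' ?_
  filter_upwards [self_mem_nhdsWithin] with z hz
  exact (norm_mul_norm_add_div_sub (by rw [csqrt_sq, csqrt_sq]; ring) hk hz).symm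

lemma sqrt_inv_add_div_sqrt_inv_sub {x : ℝ} (hx : 0 < x) :
    (Real.sqrt x⁻¹ + Real.sqrt x) / (Real.sqrt x⁻¹ - Real.sqrt x) = (1 + x) / (1 - x) := by
  have hs : 0 < Real.sqrt x := Real.sqrt_pos.2 hx
  rw [Real.sqrt_inv]
  field_simp
  rw [Real.sq_sqrt hx.le]

section PhiTilde

variable {c : ℝ}

lemma bconst_eq_inv_aconst : bconst c = (aconst c)⁻¹ := by
  rw [aconst, bconst, inv_div]

lemma aconst_pos (hc1 : c < 1) : 0 < aconst c := by
  have : Real.sqrt c < 1 := (Real.sqrt_lt' one_pos).2 (by simpa using hc1)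
  exact div_pos (by linarith) (by positivity)

lemma aconst_lt_one (hc0 : 0 < c) : aconst c < 1 := by
  have : 0 < Real.sqrt c := Real.sqrt_pos.2 hc0
  rw [aconst, div_lt_one (by positivity)]
  linarith

lemma bconst_mul_aconst (hc1 : c < 1) : bconst c * aconst c = 1 := by
  rw [bconst_eq_inv_aconst]
  exact inv_mul_cancel₀ (aconst_pos hc1).ne'

lemma aconst_lt_bconst (hc0 : 0 < c) (hc1 : c < 1) : aconst c < bconst c := by
  rw [bconst_eq_inv_aconst]
  exact (aconst_lt_one hc0).trans ((one_lt_inv₀ (aconst_pos hc1)).2 (aconst_lt_one hc0))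

lemma one_add_aconst_div_one_sub_aconst :
    (1 + aconst c) / (1 - aconst c) = (Real.sqrt c)⁻¹ := by
  have : 0 < 1 + Real.sqrt c := by positivity
  rw [aconst]
  field_simp
  ring_nf

lemma log_sqrt_bconst_add_div_sub (hc0 : 0 < c) (hc1 : c < 1) :
    Real.log ((Real.sqrt (bconst c) + Real.sqrt (aconst c)) /
      (Real.sqrt (bconst c) - Real.sqrt (aconst c))) = -(Real.log c / 2) := by
  rw [bconst_eq_inv_aconst, sqrt_inv_add_div_sqrt_inv_sub (aconst_pos hc1),
    one_add_aconst_div_one_sub_aconst, Real.log_inv, Real.log_sqrt hc0.le]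

lemma tendsto_phiTilde_aconst (hc0 : 0 < c) (hc1 : c < 1) :
    Tendsto (phiTilde c) (𝓝 (aconst c : ℂ)) (𝓝 0) := by
  have ha1 := aconst_lt_one hc0
  have hlog₁ := tendsto_log_csqrt_add_div_csqrt_sub (f := fun z => 1 - (aconst c : ℂ) * z)
    (g := fun z => 1 - (bconst c : ℂ) * z) (z₀ := aconst c) (x := 1 - aconst c * aconst c)
    (y := 0) (by fun_prop) (by fun_prop) (by push_cast; ring)
    (by simp [← ofReal_mul, bconst_mul_aconst hc1]) le_rfl (by nlinarith [aconst_pos hc1])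
  have hlog₂ := tendsto_log_csqrt_add_div_csqrt_sub (f := fun z => (bconst c : ℂ) - z)
    (g := fun z => (aconst c : ℂ) - z) (z₀ := aconst c) (x := bconst c - aconst c) (y := 0)
    (by fun_prop) (by fun_prop) (by push_cast; ring) (by simp) le_rfl
    (sub_pos.2 (aconst_lt_bconst hc0 hc1))
  have h₁ : Real.sqrt (1 - aconst c * aconst c) ≠ 0 :=
    (Real.sqrt_pos.2 (by nlinarith [aconst_pos hc1])).ne'
  have h₂ : Real.sqrt (bconst c - aconst c) ≠ 0 :=
    (Real.sqrt_pos.2 (sub_pos.2 (aconst_lt_bconst hc0 hc1))).ne'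
  simp only [Real.sqrt_zero, add_zero, sub_zero, div_self h₁, div_self h₂, Real.log_one,
    ofReal_zero] at hlog₁ hlog₂
  have h : Tendsto (phiTilde c) (𝓝 (aconst c : ℂ)) (𝓝 (aconst c * 0 - 0)) :=
    (tendsto_id.mul hlog₁).sub hlog₂
  simpa only [mul_zero, sub_zero] using h

lemma tendsto_phiTilde_zero (hc0 : 0 < c) (hc1 : c < 1) :
    Tendsto (phiTilde c) (𝓝[≠] 0) (𝓝 ((Real.log c : ℂ) / 2)) := by
  have hlog₁ := tendsto_mul_log_csqrt_add_div_csqrt_sub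
    (ofReal_injective.ne (aconst_lt_bconst hc0 hc1).ne)
  have hlog₂ := tendsto_log_csqrt_add_div_csqrt_sub (f := fun z => (bconst c : ℂ) - z)
    (g := fun z => (aconst c : ℂ) - z) (z₀ := 0) (by fun_prop) (by fun_prop) (by simp)
    (by simp) (aconst_pos hc1).le (aconst_lt_bconst hc0 hc1)
  rw [log_sqrt_bconst_add_div_sub hc0 hc1] at hlog₂
  have h : Tendsto (phiTilde c) (𝓝[≠] 0) (𝓝 (0 - ((-(Real.log c / 2) : ℝ) : ℂ))) :=
    hlog₁.sub (hlog₂.mono_left nhdsWithin_le_nhds)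
  convert h using 2
  push_cast
  ring

lemma phiTildeDom_subset_compl_zero : phiTildeDom c ⊆ {0}ᶜ :=
  fun _ hz (h0 : _ = 0) => hz ⟨by simp [h0], Or.inl (by simp [h0])⟩

end PhiTilde

/-- The boundary values `φ̃(a) = 0` and `φ̃(0) = (1/2) log c`, as limits within the domain. -/
theorem phiTilde_boundary_values (c : ℝ) (hc0 : 0 < c) (hc1 : c < 1) :
    Tendsto (phiTilde c) (𝓝[phiTildeDom c] (aconst c : ℂ)) (𝓝 0) ∧
    Tendsto (phiTilde c) (𝓝[phiTildeDom c] (0 : ℂ)) (𝓝 ((Real.log c : ℂ) / 2)) :=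
  ⟨(tendsto_phiTilde_aconst hc0 hc1).mono_left nhdsWithin_le_nhds,
    (tendsto_phiTilde_zero hc0 hc1).mono_left
      (nhdsWithin_mono _ phiTildeDom_subset_compl_zero)⟩
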